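/- arXiv:2402.12275 — 3 statements merged into one kernel-verified Lean document; each statement's English description precedes it below -/
import Mathlib

section
/- If a dataset D is mutually independent with respect to a model space M (i.e., for each data point d in D there exists a model in M consistent with all of D except d), then the size of D is at most the cardinality of M. -/
def IsSeparatingModel {M X : Type*} (sat : M → X → Prop) (D : Finset X) (m : M) (d : X) : Prop :=
  ¬ sat m d ∧ ∀ d' ∈ D, d' ≠ d → sat m d'

theorem IsSeparatingModel.eq {M X : Type*} {sat : M → X → Prop} {D : Finset X} {m : M}
    {d e : X} (hd : IsSeparatingModel sat D m d) (he : IsSeparatingModel sat D m e) (heD : e ∈ D) :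
    e = d :=
  by_contra fun hne ↦ he.1 (hd.2 e heD hne)

theorem Finset.card_le_card_of_forall_exists_separatingModel {M X : Type*}
    (sat : M → X → Prop) (D : Finset X) (S : Finset M)
    (h : ∀ d ∈ D, ∃ m ∈ S, IsSeparatingModel sat D m d) : D.card ≤ S.card :=
  card_le_card_of_forall_subsingleton (fun d m ↦ IsSeparatingModel sat D m d) h
    fun _ _ _ ⟨_, hd⟩ _ ⟨heD, he⟩ ↦ (hd.eq he heD).symm

/-- A finite dataset `D` is mutually independent w.r.t. a finite model space `M`:
for each point `d ∈ D` there is a model failing on `d` but satisfying all other points. -/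
theorem stmt_0 {M X : Type*} [Fintype M] (sat : M → X → Prop) (D : Finset X)
    (hMI : ∀ d ∈ D, ∃ m : M, ¬ sat m d ∧ ∀ d' ∈ D, d' ≠ d → sat m d') :
    D.card ≤ Fintype.card M :=
  D.card_le_card_of_forall_exists_separatingModel sat Finset.univ
    fun d hd ↦ (hMI d hd).imp fun _ hm ↦ ⟨Finset.mem_univ _, hm⟩
end

section
/- Every finite dataset D has a mutually independent subset D' ⊆ D such that a model in M satisfies all of D if and only if it satisfies all of D' (i.e., D and D' impose the same constraints on M). -/
/-!
Among the subsets of `D` cutting out the same set of models as `D`, pick one, `D'`, that is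
minimal for inclusion. Dropping any `d ∈ D'` must then admit a new model; that model satisfies
every other point of `D'` and so can only violate `d`, which witnesses the independence of `d`.
-/

namespace Finset

variable {M X : Type*} (sat : M → X → Prop)

def satisfiers (E : Finset X) : Set M := {m | ∀ d ∈ E, sat m d}

def MutuallyIndependent (E : Finset X) : Prop :=
  ∀ d ∈ E, ∃ m : M, ¬ sat m d ∧ ∀ d' ∈ E, d' ≠ d → sat m d'

variable {sat}

theorem satisfiers_anti {E F : Finset X} (h : E ⊆ F) : satisfiers sat F ⊆ satisfiers sat E :=
  fun _ hm d hd => hm d (h hd)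

theorem mutuallyIndependent_of_minimal [DecidableEq X] {S : Set M} {E : Finset X}
    (hE : Minimal (fun F => satisfiers sat F = S) E) : MutuallyIndependent sat E := by
  intro d hd
  have hne : satisfiers sat (E.erase d) ≠ satisfiers sat E := by
    rw [hE.prop]
    exact fun h => hE.not_lt h (erase_ssubset hd)
  obtain ⟨m, hm_erase, hm_not⟩ : ∃ m, m ∈ satisfiers sat (E.erase d) ∧ m ∉ satisfiers sat E :=
    Set.not_subset.mp fun h => hne (h.antisymm (satisfiers_anti (erase_subset d E)))
  have hm_others : ∀ e ∈ E, e ≠ d → sat m e := fun e he hed => hm_erase e (mem_erase.mpr ⟨hed, he⟩)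
  refine ⟨m, fun hmd => hm_not fun e he => ?_, hm_others⟩
  obtain rfl | hed := eq_or_ne e d
  · exact hmd
  · exact hm_others e he hed

end Finset

/-- Lemma α: every finite dataset `D` has a mutually independent subset `D' ⊆ D`
imposing exactly the same constraints on the model space. -/
theorem stmt_9 {M X : Type*} (sat : M → X → Prop) (D : Finset X) :
    ∃ D' : Finset X, D' ⊆ D ∧
      (∀ d ∈ D', ∃ m : M, ¬ sat m d ∧ ∀ d' ∈ D', d' ≠ d → sat m d') ∧
      (∀ m : M, (∀ d ∈ D, sat m d) ↔ (∀ d ∈ D', sat m d)) := by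
  classical
  obtain ⟨D', hD'D, hmin⟩ := exists_minimal_le_of_wellFoundedLT
    (fun E => E.satisfiers sat = D.satisfiers sat) D rfl
  exact ⟨D', hD'D, Finset.mutuallyIndependent_of_minimal hmin, Set.ext_iff.mp hmin.prop.symm⟩
end

section
/- A mutually independent set D w.r.t. M with |D| = |M| forces a bijection: the witness map d ↦ m(d) (where m(d) fails on d and satisfies D \ {d}) is a bijection from D onto M, and every model in M fails on exactly one point of D. -/
/-!
Distinct points `a ≠ b` of `D` have distinct witnesses, since `w a` fails on `a` while `w b`
satisfies it. An injective map from `D` into a set of the same size is onto, and the model `w d`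
fails on no point of `D` other than `d`.
-/

def IsWitnessMap {M X : Type*} (sat : M → X → Prop) (D : Set X) (w : X → M) : Prop :=
  ∀ d ∈ D, ¬ sat (w d) d ∧ ∀ d' ∈ D, d' ≠ d → sat (w d) d'

namespace IsWitnessMap

variable {M X : Type*} {sat : M → X → Prop} {D : Set X} {w : X → M}

theorem injOn (hw : IsWitnessMap sat D w) : Set.InjOn w D := by
  intro a ha b hb hab
  by_contra hne
  have hba : sat (w b) a := (hw b hb).2 a ha hne
  exact (hw a ha).1 (hab ▸ hba)

theorem existsUnique_not_sat (hw : IsWitnessMap sat D w) {d : X} (hd : d ∈ D) :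
    ∃! d' : X, d' ∈ D ∧ ¬ sat (w d) d' :=
  ⟨d, ⟨hd, (hw d hd).1⟩, fun _ ⟨hd', hfail⟩ =>
    by_contra fun hne => hfail ((hw d hd).2 _ hd' hne)⟩

theorem bijOn_univ [Fintype M] {D : Finset X} (hw : IsWitnessMap sat D w)
    (hcard : D.card = Fintype.card M) : Set.BijOn w D Set.univ := by
  refine ⟨Set.mapsTo_univ w _, hw.injOn, ?_⟩
  rw [← Finset.coe_univ]
  exact Finset.surjOn_of_injOn_of_card_le w (by simp) hw.injOn hcard.ge

end IsWitnessMap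

/-- If `D` is mutually independent w.r.t. `M` with `|D| = |M|` and `w` assigns to each
`d ∈ D` a witness model failing on `d` and satisfying `D \ {d}`, then `w` is a
bijection from `D` onto `M`, and every model in `M` fails on exactly one point of `D`. -/
theorem stmt_19 {M X : Type*} [Fintype M] (sat : M → X → Prop) (D : Finset X)
    (hcard : D.card = Fintype.card M) (w : X → M)
    (hw : ∀ d ∈ D, ¬ sat (w d) d ∧ ∀ d' ∈ D, d' ≠ d → sat (w d) d') :
    Set.BijOn w ↑D Set.univ ∧ ∀ m : M, ∃! d : X, d ∈ D ∧ ¬ sat m d := by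
  have hbij : Set.BijOn w D Set.univ := IsWitnessMap.bijOn_univ hw hcard
  refine ⟨hbij, fun m => ?_⟩
  obtain ⟨d, hd, rfl⟩ := hbij.surjOn (Set.mem_univ m)
  exact IsWitnessMap.existsUnique_not_sat hw hd
end
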